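/- With L given entrywise by L_{t',t} = Q_t^{1/2} ℓ_{t',t} where ℓ_{t,t} = 1 and ℓ_{t',t} = F_{t'}(∏_{l=t+1}^{t'} G_l) K_t for t' > t, the following forward-backward recursion computes x̃ = Lᵀ u for any u ∈ ℝᴺ: x̃_N = Q_N^{1/2} u_N, x̃_{N−1} = Q_{N−1}^{1/2}(ℓ_{N,N−1} u_N + u_{N−1}), g_{N−1} = F_N G_N u_N, and for t = N−2,…,1: x̃_t = Q_t^{1/2}(ℓ̃_{t+1,t} + ℓ_{t+1,t} u_{t+1} + u_t) with ℓ̃_{t+1,t} = g_{t+1} G_{t+1} K_t and g_t = g_{t+1} G_{t+1} + F_{t+1} G_{t+1} u_{t+1}. -/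

import Mathlib

open Matrix

/-- Product `G_s G_{s-1} ⋯ G_{t+1}` of transition matrices (empty product = 1). -/
noncomputable def transProd {q : ℕ} (G : ℕ → Matrix (Fin q) (Fin q) ℝ) (t s : ℕ) :
    Matrix (Fin q) (Fin q) ℝ :=
  ((List.range (s - t)).map (fun i => G (s - i))).prod

/-- Backward recursion of Lemma 1 (inverse Kalman filter), 0-based with last index `T`:
`ikfBwd … j = (x̃_{T-j}, g_{T-j})`, where `x̃_T = Q_T^{1/2} u_T`,
`x̃_{T-1} = Q_{T-1}^{1/2} (ℓ_{T,T-1} u_T + u_{T-1})`, `g_{T-1} = F_T G_T u_T`, and for lower `t`: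
`x̃_t = Q_t^{1/2}(ℓ̃_{t+1,t} + ℓ_{t+1,t} u_{t+1} + u_t)` with
`ℓ̃_{t+1,t} = g_{t+1} G_{t+1} K_t`, `ℓ_{t+1,t} = F_{t+1} G_{t+1} K_t`, and
`g_t = g_{t+1} G_{t+1} + F_{t+1} G_{t+1} u_{t+1}`. (The second component at `j = 0` is a
placeholder `0`, unused by the recursion.) -/
noncomputable def ikfBwd {q : ℕ} (F : ℕ → Fin q → ℝ) (G : ℕ → Matrix (Fin q) (Fin q) ℝ)
    (K : ℕ → Fin q → ℝ) (Q u : ℕ → ℝ) (T : ℕ) : ℕ → ℝ × (Fin q → ℝ)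
  | 0 => (Real.sqrt (Q T) * u T, 0)
  | 1 => (Real.sqrt (Q (T - 1)) * ((F T ⬝ᵥ (G T *ᵥ K (T - 1))) * u T + u (T - 1)),
          u T • Matrix.vecMul (F T) (G T))
  | j + 2 =>
      let g := (ikfBwd F G K Q u T (j + 1)).2  -- g_{t+1} where t = T - (j+2)
      let t := T - (j + 2)
      (Real.sqrt (Q t) * ((Matrix.vecMul g (G (t + 1))) ⬝ᵥ K t +
          (F (t + 1) ⬝ᵥ (G (t + 1) *ᵥ K t)) * u (t + 1) + u t),
       Matrix.vecMul g (G (t + 1)) + u (t + 1) • Matrix.vecMul (F (t + 1)) (G (t + 1)))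

lemma transProd_succ {q : ℕ} (G : ℕ → Matrix (Fin q) (Fin q) ℝ) (t : ℕ) :
    transProd G t (t+1) = G (t+1) := by
  simp [transProd, List.range_succ]

lemma transProd_step {q : ℕ} (G : ℕ → Matrix (Fin q) (Fin q) ℝ) {t s : ℕ} (h : t < s) :
    transProd G t s = transProd G (t+1) s * G (t+1) := by
  unfold transProd
  have h1 : s - t = (s - (t+1)) + 1 := by omega
  rw [h1, List.range_succ, List.map_append, List.prod_append]
  have h2 : s - (s - (t+1)) = t + 1 := by omega
  simp [h2]

lemma mySumVecMul {q : ℕ} (s : Finset ℕ) (f : ℕ → Fin q → ℝ)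
    (A : Matrix (Fin q) (Fin q) ℝ) :
    Matrix.vecMul (∑ i ∈ s, f i) A = ∑ i ∈ s, Matrix.vecMul (f i) A := by
  ext j
  simp only [Matrix.vecMul, dotProduct, Finset.sum_apply, Finset.sum_mul]
  rw [Finset.sum_comm]

lemma mySumDot {q : ℕ} (s : Finset ℕ) (f : ℕ → Fin q → ℝ) (v : Fin q → ℝ) :
    (∑ i ∈ s, f i) ⬝ᵥ v = ∑ i ∈ s, f i ⬝ᵥ v := by
  simp only [dotProduct, Finset.sum_apply, Finset.sum_mul]
  rw [Finset.sum_comm]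

lemma Ioc_cons {t T : ℕ} (h : t < T) :
    Finset.Ioc t T = Finset.cons (t+1) (Finset.Ioc (t+1) T) (by simp) := by
  rw [← Finset.Icc_add_one_left_eq_Ioc, Finset.Icc_eq_cons_Ioc (by omega)]

lemma ikfBwd_snd {q : ℕ} (F : ℕ → Fin q → ℝ) (G : ℕ → Matrix (Fin q) (Fin q) ℝ)
    (K : ℕ → Fin q → ℝ) (Q u : ℕ → ℝ) (T : ℕ) :
    ∀ j : ℕ, j + 1 ≤ T →
      (ikfBwd F G K Q u T (j+1)).2 =
        ∑ s ∈ Finset.Ioc (T - (j+1)) T,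
          u s • Matrix.vecMul (F s) (transProd G (T - (j+1)) s) := by
  intro j
  induction j with
  | zero =>
      intro hT
      have h1 : T - 1 + 1 = T := by omega
      have h2 : Finset.Ioc (T - 1) T = {T} := by
        rw [← Finset.Icc_add_one_left_eq_Ioc, h1, Finset.Icc_self]
      have h3 : transProd G (T - 1) T = G T := by
        have := transProd_succ G (T - 1)
        rwa [h1] at this
      rw [h2, Finset.sum_singleton, h3]
      simp [ikfBwd]
  | succ j ih =>
      intro hT
      have hj1 : j + 1 ≤ T := by omega
      have e1 : T - (j + 1) = T - (j + 2) + 1 := by omega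
      have e2 : T - (j + 2) < T := by omega
      set t := T - (j + 2) with ht
      have hg : (ikfBwd F G K Q u T (j + 2)).2 =
          Matrix.vecMul (ikfBwd F G K Q u T (j+1)).2 (G (t + 1)) +
            u (t + 1) • Matrix.vecMul (F (t + 1)) (G (t + 1)) := by
        simp [ikfBwd, ht]
      rw [hg, ih hj1, e1, mySumVecMul]
      rw [Ioc_cons e2, Finset.sum_cons, transProd_succ]
      rw [add_comm]
      congr 1
      refine Finset.sum_congr rfl ?_
      intro s hs
      have hts : t + 1 < s := (Finset.mem_Ioc.mp hs).1
      rw [Matrix.smul_vecMul, Matrix.vecMul_vecMul, ← transProd_step G (by omega : t < s)]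

/-- Lemma 1 of the paper (inverse Kalman filter computation of `Lᵀu`): with `L` given
entrywise by `L_{t',t} = Q_t^{1/2} ℓ_{t',t}`, `ℓ_{t,t} = 1`,
`ℓ_{t',t} = F_{t'} (∏_{l=t+1}^{t'} G_l) K_t` for `t' > t`, the backward recursion output
equals `Lᵀ u`. -/
theorem ikf_transpose_mulVec {N q : ℕ} (hN : 0 < N)
    (F : ℕ → Fin q → ℝ) (G : ℕ → Matrix (Fin q) (Fin q) ℝ)
    (K : ℕ → Fin q → ℝ) (Q : ℕ → ℝ) (hQ : ∀ t, 0 < Q t)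
    (L : Matrix (Fin N) (Fin N) ℝ)
    (hL : ∀ t' t : Fin N, L t' t =
      if (t : ℕ) < (t' : ℕ) then Real.sqrt (Q t) * (F t' ⬝ᵥ (transProd G t t' *ᵥ K t))
      else if (t : ℕ) = (t' : ℕ) then Real.sqrt (Q t) else 0)
    (u : ℕ → ℝ) :
    ∀ t : Fin N, (L.transpose *ᵥ fun i : Fin N => u i) t =
      (ikfBwd F G K Q u (N - 1) (N - 1 - t)).1 := by
  intro t
  set T := N - 1 with hT
  have htT : (t : ℕ) ≤ T := by have := t.isLt; omega
  set φ : ℕ → ℝ := fun s =>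
    (if (t : ℕ) < s then Real.sqrt (Q t) * (F s ⬝ᵥ (transProd G t s *ᵥ K t))
      else if (t : ℕ) = s then Real.sqrt (Q t) else 0) * u s with hφ
  have hLHS : (L.transpose *ᵥ fun i : Fin N => u i) t =
      Real.sqrt (Q t) * u t +
        ∑ s ∈ Finset.Ioc (t : ℕ) T,
          Real.sqrt (Q t) * ((F s ⬝ᵥ (transProd G t s *ᵥ K t)) * u s) := by
    have step1 : (L.transpose *ᵥ fun i : Fin N => u i) t = ∑ x : Fin N, φ (x : ℕ) := by
      simp only [Matrix.mulVec, dotProduct, Matrix.transpose_apply]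
      refine Finset.sum_congr rfl ?_
      intro x _
      rw [hL x t, hφ]
    rw [step1, Fin.sum_univ_eq_sum_range φ N]
    rw [Finset.range_eq_Ico,
      ← Finset.sum_Ico_consecutive φ (Nat.zero_le ((t : ℕ) + 1))
        (show (t : ℕ) + 1 ≤ N by omega)]
    congr 1
    · rw [← Finset.range_eq_Ico, Finset.sum_range_succ]
      have h0 : ∑ s ∈ Finset.range (t : ℕ), φ s = 0 := by
        refine Finset.sum_eq_zero ?_
        intro s hs
        have hst : s < (t : ℕ) := Finset.mem_range.mp hs
        rw [hφ]
        simp only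
        rw [if_neg (by omega), if_neg (by omega), zero_mul]
      rw [h0, zero_add, hφ]
      simp
    · have hI : Finset.Ico ((t : ℕ) + 1) N = Finset.Ioc (t : ℕ) T := by
        ext x
        simp only [Finset.mem_Ico, Finset.mem_Ioc]
        omega
      rw [hI]
      refine Finset.sum_congr rfl ?_
      intro s hs
      have hts : (t : ℕ) < s := (Finset.mem_Ioc.mp hs).1
      rw [hφ]
      simp only
      rw [if_pos hts, mul_assoc]
  rw [hLHS]
  rcases hj : T - (t : ℕ) with _ | j
  · -- t = T
    have htt : (t : ℕ) = T := by omega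
    rw [htt, Finset.Ioc_self, Finset.sum_empty, add_zero]
    simp [ikfBwd]
  · rcases j with _ | j
    · -- t = T - 1
      have htt : (t : ℕ) = T - 1 := by omega
      have hT1 : 1 ≤ T := by omega
      have h1 : T - 1 + 1 = T := by omega
      have h2 : Finset.Ioc ((t : ℕ)) T = {T} := by
        rw [htt, ← Finset.Icc_add_one_left_eq_Ioc, h1, Finset.Icc_self]
      have h3 : transProd G (t : ℕ) T = G T := by
        have := transProd_succ G (T - 1)
        rw [h1] at this
        rw [htt, this]
      rw [h2, Finset.sum_singleton, h3]
      simp only [ikfBwd]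
      rw [htt]
      ring
    · -- t = T - (j + 2)
      have htt : (t : ℕ) = T - (j + 2) := by omega
      have hT2 : j + 2 ≤ T := by omega
      have hj1 : j + 1 ≤ T := by omega
      have e1 : T - (j + 1) = (t : ℕ) + 1 := by omega
      simp only [ikfBwd]
      rw [ikfBwd_snd F G K Q u T j hj1, e1, ← htt]
      rw [mySumVecMul, mySumDot]
      have hterm : ∀ s ∈ Finset.Ioc ((t : ℕ) + 1) T,
          Matrix.vecMul (u s • Matrix.vecMul (F s) (transProd G ((t : ℕ) + 1) s))
              (G ((t : ℕ) + 1)) ⬝ᵥ K t =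
            u s * (F s ⬝ᵥ (transProd G (t : ℕ) s *ᵥ K t)) := by
        intro s hs
        have hts : (t : ℕ) + 1 < s := (Finset.mem_Ioc.mp hs).1
        rw [Matrix.smul_vecMul, Matrix.vecMul_vecMul,
          ← transProd_step G (by omega : (t : ℕ) < s), smul_dotProduct,
          ← Matrix.dotProduct_mulVec, smul_eq_mul]
      rw [Finset.sum_congr rfl hterm]
      rw [Ioc_cons (show (t : ℕ) < T by omega), Finset.sum_cons, transProd_succ]
      rw [mul_add, mul_add, Finset.mul_sum]
      have hsum : ∀ s ∈ Finset.Ioc ((t : ℕ) + 1) T,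
          Real.sqrt (Q t) * ((F s ⬝ᵥ (transProd G (t : ℕ) s *ᵥ K t)) * u s) =
            Real.sqrt (Q t) * (u s * (F s ⬝ᵥ (transProd G (t : ℕ) s *ᵥ K t))) := by
        intro s _; ring
      rw [Finset.sum_congr rfl hsum]
      ring
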